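/- A permutation w ∈ S_{n+1} is fully commutative if and only if for every i ∈ {1,…,n}, the number of occurrences of the letter s_i is the same in all reduced expressions of w. -/

import Mathlib

namespace NCTL

/-- 0-indexed simple reflection: letter `i` (with `0 ≤ i < n`) stands for the simple
transposition `s_{i+1}` of the paper, i.e. the swap of the 0-indexed points `i` and `i+1`
of `Fin (n+1)` (which represent the points `i+1` and `i+2` of `{1,…,n+1}`). -/
def simpleRefl (n : ℕ) (i : ℕ) : Equiv.Perm (Fin (n + 1)) :=
  if h : i < n then Equiv.swap ⟨i, by omega⟩ ⟨i + 1, by omega⟩ else 1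

/-- The permutation represented by a word in the letters. -/
def wordProd (n : ℕ) (l : List ℕ) : Equiv.Perm (Fin (n + 1)) :=
  (l.map (simpleRefl n)).prod

/-- A valid word in the letters `0,…,n-1`. -/
def IsWord (n : ℕ) (l : List ℕ) : Prop := ∀ a ∈ l, a < n

/-- A standard Coxeter element: a product of all the simple reflections, each occurring
exactly once, in some order. -/
def IsStdCox (n : ℕ) (c : Equiv.Perm (Fin (n + 1))) : Prop :=
  ∃ l : List ℕ, l.Perm (List.range n) ∧ wordProd n l = c

def IsTransposition {α : Type*} [DecidableEq α] (σ : Equiv.Perm α) : Prop :=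
  ∃ a b, a ≠ b ∧ σ = Equiv.swap a b

/-- Reflection length: the minimal number of transpositions needed to write `w`. -/
noncomputable def reflLength (n : ℕ) (w : Equiv.Perm (Fin (n + 1))) : ℕ :=
  sInf {k | ∃ l : List (Equiv.Perm (Fin (n + 1))),
    l.length = k ∧ (∀ t ∈ l, IsTransposition t) ∧ l.prod = w}

/-- The absolute order `u ≤_T v`. -/
def absLe (n : ℕ) (u v : Equiv.Perm (Fin (n + 1))) : Prop :=
  reflLength n u + reflLength n (u⁻¹ * v) = reflLength n v

/-- The set of noncrossing partitions `NC(S_{n+1}, c)`. -/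
def NC (n : ℕ) (c : Equiv.Perm (Fin (n + 1))) : Set (Equiv.Perm (Fin (n + 1))) :=
  {x | absLe n x c}

/-- A block of `x`: an orbit of `x` of cardinality at least 2 (recorded as a `Finset`). -/
def IsBlock (n : ℕ) (x : Equiv.Perm (Fin (n + 1))) (B : Finset (Fin (n + 1))) : Prop :=
  ∃ a, x a ≠ a ∧ ∀ b, b ∈ B ↔ x.SameCycle a b

/-- `k` is the minimum of some block of `x`. -/
def IsBlockMin (n : ℕ) (x : Equiv.Perm (Fin (n + 1))) (k : Fin (n + 1)) : Prop :=
  ∃ B, IsBlock n x B ∧ k ∈ B ∧ ∀ j ∈ B, k ≤ j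

/-- `k` is the maximum of some block of `x`. -/
def IsBlockMax (n : ℕ) (x : Equiv.Perm (Fin (n + 1))) (k : Fin (n + 1)) : Prop :=
  ∃ B, IsBlock n x B ∧ k ∈ B ∧ ∀ j ∈ B, j ≤ k

/-- `k` is nested in the block `B`: `k ∉ B` and `min B < k < max B`. -/
def Nested (n : ℕ) (k : Fin (n + 1)) (B : Finset (Fin (n + 1))) : Prop :=
  k ∉ B ∧ (∃ a ∈ B, a < k) ∧ ∃ b ∈ B, k < b

open Classical in
/-- `D_x` : the support of `x` minus the set of minima of blocks of `x`. -/
noncomputable def Dset (n : ℕ) (x : Equiv.Perm (Fin (n + 1))) : Finset (Fin (n + 1)) :=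
  x.support.filter fun k => ¬ IsBlockMin n x k

open Classical in
/-- `U_x` : the support of `x` minus the set of maxima of blocks of `x`. -/
noncomputable def Uset (n : ℕ) (x : Equiv.Perm (Fin (n + 1))) : Finset (Fin (n + 1)) :=
  x.support.filter fun k => ¬ IsBlockMax n x k

/-- The set `I(n)` of pairs `(D, U)` with `|D| = |U|` and `d_i < u_i` for all `i`
(in the increasing enumerations). -/
def Iset (n : ℕ) : Set (Finset (Fin (n + 1)) × Finset (Fin (n + 1))) :=
  {p | ∃ h : p.1.card = p.2.card, ∀ i : Fin p.1.card,
    p.1.orderEmbOfFin rfl i < p.2.orderEmbOfFin h.symm i}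

/-- `R_c = {c^m(1) : 0 ≤ m ≤ k₀}` where `k₀ ≥ 1` is minimal with `c^{k₀}(1) = n+1`
(0-indexed: `1 ↦ 0` and `n+1 ↦ Fin.last n`). -/
def Rset (n : ℕ) (c : Equiv.Perm (Fin (n + 1))) : Set (Fin (n + 1)) :=
  {j | ∃ m : ℕ, (c ^ m) (0 : Fin (n + 1)) = j ∧
    ∀ m', 0 < m' → m' < m → (c ^ m') (0 : Fin (n + 1)) ≠ Fin.last n}

/-- `L_c = {1, n+1} ∪ ({1,…,n+1} \ R_c)` (0-indexed). -/
def Lset (n : ℕ) (c : Equiv.Perm (Fin (n + 1))) : Set (Fin (n + 1)) :=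
  {0, Fin.last n} ∪ (Rset n c)ᶜ

open Classical in
/-- `M_x^c = D_x ∩ U_x ∩ L_c`. -/
noncomputable def Mset (n : ℕ) (c x : Equiv.Perm (Fin (n + 1))) : Finset (Fin (n + 1)) :=
  (Dset n x ∩ Uset n x).filter fun k => k ∈ Lset n c

open Classical in
/-- `N_x^c` : indices in `L_c`, not in `supp(x)`, nested in at least one block of `x`. -/
noncomputable def Nnest (n : ℕ) (c x : Equiv.Perm (Fin (n + 1))) : Finset (Fin (n + 1)) :=
  Finset.univ.filter fun k =>
    k ∈ Lset n c ∧ k ∉ x.support ∧ ∃ B, IsBlock n x B ∧ Nested n k B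

/-- `l` is a reduced expression of `w`. -/
def IsReduced (n : ℕ) (w : Equiv.Perm (Fin (n + 1))) (l : List ℕ) : Prop :=
  IsWord n l ∧ wordProd n l = w ∧
    ∀ l', IsWord n l' → wordProd n l' = w → l.length ≤ l'.length

/-- A single commutation move `s_a s_b ↦ s_b s_a` (with `|a - b| ≥ 2`) on words. -/
def CommMove (l l' : List ℕ) : Prop :=
  ∃ (u v : List ℕ) (a b : ℕ), (a + 2 ≤ b ∨ b + 2 ≤ a) ∧
    l = u ++ a :: b :: v ∧ l' = u ++ b :: a :: v

/-- Fully commutative: any two reduced expressions are related by commutation moves. -/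
def IsFC (n : ℕ) (w : Equiv.Perm (Fin (n + 1))) : Prop :=
  ∀ l l', IsReduced n w l → IsReduced n w l' → Relation.ReflTransGen CommMove l l'

/-- `run i j = [i, i-1, …, j]` (for `j ≤ i`). -/
def run (i j : ℕ) : List ℕ := (List.range (i + 1 - j)).map fun t => i - t

/-- The word `(s_{i_1} ⋯ s_{j_1}) ⋯ (s_{i_k} ⋯ s_{j_k})` of normal-form shape. -/
def normalWord (k : ℕ) (i j : Fin k → ℕ) : List ℕ :=
  (List.ofFn fun m : Fin k => run (i m) (j m)).flatten

/-- The data `(k, i, j)` is the normal form of `w`. -/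
def IsNormalFormOf (n : ℕ) (w : Equiv.Perm (Fin (n + 1))) (k : ℕ) (i j : Fin k → ℕ) : Prop :=
  (∀ m, i m < n) ∧ (∀ m, j m ≤ i m) ∧ StrictMono i ∧ StrictMono j ∧
    IsReduced n w (normalWord k i j)

/-- A word of normal-form shape. -/
def NormalShape (n : ℕ) (l : List ℕ) : Prop :=
  ∃ (k : ℕ) (i j : Fin k → ℕ), (∀ m, i m < n) ∧ (∀ m, j m ≤ i m) ∧
    StrictMono i ∧ StrictMono j ∧ l = normalWord k i j

/-- `a ∈ I_w` (letters 0-indexed). -/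
def memIset (n : ℕ) (w : Equiv.Perm (Fin (n + 1))) (a : ℕ) : Prop :=
  ∃ (k : ℕ) (i j : Fin k → ℕ), IsNormalFormOf n w k i j ∧ ∃ m, i m = a

/-- `a ∈ J_w` (letters 0-indexed). -/
def memJset (n : ℕ) (w : Equiv.Perm (Fin (n + 1))) (a : ℕ) : Prop :=
  ∃ (k : ℕ) (i j : Fin k → ℕ), IsNormalFormOf n w k i j ∧ ∃ m, j m = a

/-- The characterizing property of the bijection `φ : NC(S_{n+1},c) → FC(S_{n+1})`. -/
def PhiCharOn (n : ℕ) (c : Equiv.Perm (Fin (n + 1)))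
    (φ : Equiv.Perm (Fin (n + 1)) → Equiv.Perm (Fin (n + 1))) : Prop :=
  Set.BijOn φ (NC n c) {w | IsFC n w} ∧
  ∀ x ∈ NC n c, ∀ k : Fin (n + 1),
    (memJset n (φ x) (k : ℕ) ↔
      (k ∈ Rset n c ∧ k ∈ Dset n x) ∨ (k ∈ Lset n c ∧ IsBlockMin n x k) ∨
      (k ∈ Lset n c ∧ k ∉ x.support ∧ ∃ B, IsBlock n x B ∧ Nested n k B)) ∧
    ((∃ a : ℕ, a + 1 = (k : ℕ) ∧ memIset n (φ x) a) ↔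
      (k ∈ Rset n c ∧ k ∈ Uset n x) ∨ (k ∈ Lset n c ∧ IsBlockMax n x k) ∨
      (k ∈ Lset n c ∧ k ∉ x.support ∧ ∃ B, IsBlock n x B ∧ Nested n k B))

/-- `(a,b)` is a bump of the block `B`. -/
def IsBump (n : ℕ) (a b : Fin (n + 1)) (B : Finset (Fin (n + 1))) : Prop :=
  a < b ∧ a ∈ B ∧ b ∈ B ∧ ∀ j ∈ B, ¬ (a < j ∧ j < b)

/-- `L` is a distinguished expression of the block `B` of `x`: it lists the bumps of `B`,
each exactly once, and its product (as transpositions) is the cycle of `x` on `B`. -/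
def IsDistinguished (n : ℕ) (x : Equiv.Perm (Fin (n + 1))) (B : Finset (Fin (n + 1)))
    (L : List (Fin (n + 1) × Fin (n + 1))) : Prop :=
  L.Nodup ∧ (∀ p, p ∈ L ↔ IsBump n p.1 p.2 B) ∧
    ∀ j, ((L.map fun p => Equiv.swap p.1 p.2).prod) j = if j ∈ B then x j else j

/-- The key ordering the blocks: the minimal `m ≥ 1` with `c^{-m}(n+1) = min B`. -/
noncomputable def blockKey (n : ℕ) (c : Equiv.Perm (Fin (n + 1)))
    (B : Finset (Fin (n + 1))) : ℕ :=
  sInf {m | 1 ≤ m ∧ ∃ b ∈ B, (∀ j ∈ B, b ≤ j) ∧ (c⁻¹ ^ m) (Fin.last n) = b}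

/-- `L` encodes a standard form `m_x^c` of `x`: the list (in order) of the bumps whose
syllables, concatenated, give the standard form; the blocks are taken in increasing order,
and a distinguished expression is used inside each block. -/
def IsStdFormData (n : ℕ) (c x : Equiv.Perm (Fin (n + 1)))
    (L : List (Fin (n + 1) × Fin (n + 1))) : Prop :=
  ∃ (Bs : List (Finset (Fin (n + 1)))) (Ls : List (List (Fin (n + 1) × Fin (n + 1)))),
    Bs.Nodup ∧ (∀ B, B ∈ Bs ↔ IsBlock n x B) ∧
    Bs.Chain' (fun B B' => blockKey n c B < blockKey n c B') ∧
    List.Forall₂ (IsDistinguished n x) Bs Ls ∧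
    L = Ls.flatten

/-- The syllable of the transposition `(a, b)` (0-indexed points, `a < b`):
the word `s_{b-1} ⋯ s_{a+1} s_a s_{a+1} ⋯ s_{b-1}` in 0-indexed letters. -/
def syllable (a b : ℕ) : List ℕ := run (b - 1) a ++ (run (b - 1) (a + 1)).reverse

/-- The word of the standard form encoded by `L` (concatenation of the syllables). -/
def stdWord (n : ℕ) (L : List (Fin (n + 1) × Fin (n + 1))) : List ℕ :=
  (L.map fun p => syllable (p.1 : ℕ) (p.2 : ℕ)).flatten

/-- The letter `t` is a center of (a syllable of) the standard form encoded by `L`. -/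
def IsCenterOf (n : ℕ) (L : List (Fin (n + 1) × Fin (n + 1))) (t : ℕ) : Prop :=
  ∃ p ∈ L, (p.1 : ℕ) = t

/-- The letter `t` occurs in the syllable of the bump `p`. -/
def occursIn (n : ℕ) (p : Fin (n + 1) × Fin (n + 1)) (t : ℕ) : Prop :=
  (p.1 : ℕ) ≤ t ∧ t < (p.2 : ℕ)

/-- The selection rule for the extracted word `w_x^c`: the letter `t` is taken from the
right part of the syllables in which it occurs twice. -/
def selRight (n : ℕ) (c : Equiv.Perm (Fin (n + 1)))
    (L : List (Fin (n + 1) × Fin (n + 1))) (t : ℕ) : Prop :=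
  (IsCenterOf n L t ∧ ∃ h : t < n + 1, (⟨t, h⟩ : Fin (n + 1)) ∈ Rset n c) ∨
  (¬ IsCenterOf n L t ∧ ∃ h : t < n + 1, (⟨t, h⟩ : Fin (n + 1)) ∈ Lset n c)

open Classical in
/-- The subword extracted from a single syllable: the center is kept, and any letter
occurring twice is kept from the left or right part according to `sel`. -/
noncomputable def extractSyllable (sel : ℕ → Prop) (a b : ℕ) : List ℕ :=
  (run (b - 1) a).filter (fun t => decide (t = a ∨ ¬ sel t)) ++
  ((run (b - 1) (a + 1)).reverse).filter fun t => decide (sel t)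

/-- The extracted word `w_x^c`. -/
noncomputable def extractWord (n : ℕ) (c : Equiv.Perm (Fin (n + 1)))
    (L : List (Fin (n + 1) × Fin (n + 1))) : List ℕ :=
  (L.map fun p => extractSyllable (selRight n c L) (p.1 : ℕ) (p.2 : ℕ)).flatten


/-!
Commutation moves permute a word, so they preserve letter counts. Conversely, the Coxeter
length of `w` is its inversion count, so the first letter of a reduced word of `w` is a left
descent `s_a` of `w`, and the invariance of letter counts passes from `w` to `s_a w`. Two
reduced words of `w` are then compared by induction on their length. If their first letters
are adjacent, `s_a` and `s_{a+1}` are both left descents, so `w` has reduced words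
`a (a+1) a r` and `(a+1) a (a+1) r`, which contain `a` a different number of times. If they
are distant, both words are linked to reduced words `a b r` and `b a r`.
-/

section SimpleReflections

variable {n : ℕ}

open Equiv

lemma simpleRefl_of_lt {a : ℕ} (h : a < n) :
    simpleRefl n a = swap (⟨a, by omega⟩ : Fin (n + 1)) ⟨a + 1, by omega⟩ :=
  dif_pos h

lemma simpleRefl_of_not_lt {a : ℕ} (h : ¬ a < n) : simpleRefl n a = 1 :=
  dif_neg h

@[simp]
lemma simpleRefl_mul_self (a : ℕ) : simpleRefl n a * simpleRefl n a = 1 := by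
  unfold simpleRefl
  split_ifs <;> simp

@[simp]
lemma simpleRefl_mul_simpleRefl_mul (a : ℕ) (w : Perm (Fin (n + 1))) :
    simpleRefl n a * (simpleRefl n a * w) = w := by
  rw [← mul_assoc, simpleRefl_mul_self, one_mul]

@[simp]
lemma simpleRefl_inv (a : ℕ) : (simpleRefl n a)⁻¹ = simpleRefl n a :=
  inv_eq_of_mul_eq_one_right (simpleRefl_mul_self a)

lemma simpleRefl_apply_of_ne {a k : ℕ} (hk : k < n + 1) (h₁ : k ≠ a) (h₂ : k ≠ a + 1) :
    simpleRefl n a ⟨k, hk⟩ = ⟨k, hk⟩ := by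
  unfold simpleRefl
  split_ifs
  · exact swap_apply_of_ne_of_ne (by simpa [Fin.ext_iff]) (by simpa [Fin.ext_iff])
  · rfl

lemma simpleRefl_apply_left {a : ℕ} (h : a < n) :
    simpleRefl n a ⟨a, by omega⟩ = ⟨a + 1, by omega⟩ := by
  rw [simpleRefl_of_lt h, swap_apply_left]

lemma simpleRefl_apply_right {a : ℕ} (h : a < n) :
    simpleRefl n a ⟨a + 1, by omega⟩ = ⟨a, by omega⟩ := by
  rw [simpleRefl_of_lt h, swap_apply_right]

lemma simpleRefl_commute {a b : ℕ} (h : a + 2 ≤ b ∨ b + 2 ≤ a) :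
    Commute (simpleRefl n a) (simpleRefl n b) := by
  by_cases ha : a < n
  · by_cases hb : b < n
    · rw [simpleRefl_of_lt ha, simpleRefl_of_lt hb]
      refine (Perm.disjoint_swap_swap ?_).commute
      simp [Fin.ext_iff]
      omega
    · rw [simpleRefl_of_not_lt hb]; exact Commute.one_right _
  · rw [simpleRefl_of_not_lt ha]; exact Commute.one_left _

lemma simpleRefl_braid {a : ℕ} (h : a + 1 < n) :
    simpleRefl n a * simpleRefl n (a + 1) * simpleRefl n a =
      simpleRefl n (a + 1) * simpleRefl n a * simpleRefl n (a + 1) := by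
  rw [simpleRefl_of_lt (by omega : a < n), simpleRefl_of_lt h]
  ext x
  simp only [Perm.mul_apply, swap_apply_def]
  split_ifs <;> grind

lemma wordProd_cons (a : ℕ) (l : List ℕ) :
    wordProd n (a :: l) = simpleRefl n a * wordProd n l := by
  simp [wordProd]

lemma wordProd_append (l l' : List ℕ) :
    wordProd n (l ++ l') = wordProd n l * wordProd n l' := by
  simp [wordProd]

end SimpleReflections

section Inversions

variable {n : ℕ}

open Equiv Finset

def invSet (w : Perm (Fin (n + 1))) : Finset (Fin (n + 1) × Fin (n + 1)) :=
  {p | p.1 < p.2 ∧ w p.2 < w p.1}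

def invCount (w : Perm (Fin (n + 1))) : ℕ := #(invSet w)

/-- `s_a` is a left descent of `w`: the value `a + 1` stands left of `a` in the one-line
notation of `w`. -/
def IsLeftDescent (w : Perm (Fin (n + 1))) (a : ℕ) : Prop :=
  ∃ h : a < n, w⁻¹ ⟨a + 1, by omega⟩ < w⁻¹ ⟨a, by omega⟩

lemma simpleRefl_mul_inv_apply (a : ℕ) (w : Perm (Fin (n + 1))) (x : Fin (n + 1)) :
    (simpleRefl n a * w)⁻¹ x = w⁻¹ (simpleRefl n a x) := by
  simp [mul_inv_rev]

lemma not_isLeftDescent_iff {a : ℕ} (ha : a < n) {w : Perm (Fin (n + 1))} :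
    ¬ IsLeftDescent w a ↔ w⁻¹ ⟨a, by omega⟩ < w⁻¹ ⟨a + 1, by omega⟩ := by
  have hne : w⁻¹ ⟨a, by omega⟩ ≠ w⁻¹ ⟨a + 1, by omega⟩ := by simp [Fin.ext_iff]
  simp only [IsLeftDescent, ha, exists_true_left, not_lt]
  exact hne.le_iff_lt

lemma invSet_simpleRefl_mul_of_lt {a : ℕ} (ha : a < n) {w : Perm (Fin (n + 1))}
    (h : w⁻¹ ⟨a, by omega⟩ < w⁻¹ ⟨a + 1, by omega⟩) :
    invSet (simpleRefl n a * w) =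
      insert (w⁻¹ ⟨a, by omega⟩, w⁻¹ ⟨a + 1, by omega⟩) (invSet w) := by
  ext ⟨p, q⟩
  obtain ⟨x, rfl⟩ := (w⁻¹).surjective p
  obtain ⟨y, rfl⟩ := (w⁻¹).surjective q
  simp only [invSet, mem_filter, mem_univ, true_and, mem_insert, Prod.mk.injEq, Perm.mul_apply,
    Perm.coe_inv, apply_symm_apply, EmbeddingLike.apply_eq_iff_eq, simpleRefl_of_lt ha,
    swap_apply_def]
  rw [Perm.coe_inv] at h
  -- Swapping the adjacent values `a`, `a + 1` only changes the order of that pair.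
  split_ifs <;> grind

lemma invCount_simpleRefl_mul_of_not_isLeftDescent {a : ℕ} (ha : a < n)
    {w : Perm (Fin (n + 1))} (h : ¬ IsLeftDescent w a) :
    invCount (simpleRefl n a * w) = invCount w + 1 := by
  rw [not_isLeftDescent_iff ha] at h
  rw [invCount, invSet_simpleRefl_mul_of_lt ha h, card_insert_of_notMem, invCount]
  simp [invSet]

lemma IsLeftDescent.invCount_simpleRefl_mul {a : ℕ} {w : Perm (Fin (n + 1))}
    (h : IsLeftDescent w a) : invCount (simpleRefl n a * w) + 1 = invCount w := by
  obtain ⟨ha, hd⟩ := h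
  have hs : ¬ IsLeftDescent (simpleRefl n a * w) a := by
    rw [not_isLeftDescent_iff ha, simpleRefl_mul_inv_apply, simpleRefl_mul_inv_apply,
      simpleRefl_apply_left ha, simpleRefl_apply_right ha]
    exact hd
  simpa using (invCount_simpleRefl_mul_of_not_isLeftDescent ha hs).symm

lemma invCount_one : invCount (1 : Perm (Fin (n + 1))) = 0 := by
  rw [invCount, invSet, card_eq_zero, filter_eq_empty_iff]
  exact fun p _ h => lt_asymm h.1 h.2

lemma invCount_simpleRefl_mul_le (a : ℕ) (w : Perm (Fin (n + 1))) :
    invCount (simpleRefl n a * w) ≤ invCount w + 1 := by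
  by_cases ha : a < n
  · by_cases h : IsLeftDescent w a
    · linarith [h.invCount_simpleRefl_mul]
    · exact (invCount_simpleRefl_mul_of_not_isLeftDescent ha h).le
  · simp [simpleRefl_of_not_lt ha]

lemma invCount_wordProd_le (l : List ℕ) : invCount (wordProd n l) ≤ l.length := by
  induction l with
  | nil => simp [wordProd, invCount_one]
  | cons a l ih =>
    rw [wordProd_cons, List.length_cons]
    exact (invCount_simpleRefl_mul_le a _).trans (Nat.add_le_add_right ih 1)

lemma exists_isLeftDescent_of_ne_one {w : Perm (Fin (n + 1))} (hw : w ≠ 1) :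
    ∃ a, IsLeftDescent w a := by
  by_contra! h
  have hmono : StrictMono ⇑w⁻¹ :=
    Fin.strictMono_iff_lt_succ.mpr fun i => (not_isLeftDescent_iff i.2).mp (h i)
  exact hw (inv_eq_one.mp (Equiv.ext fun _ => hmono.apply_eq))

lemma exists_word_length_eq_invCount (w : Perm (Fin (n + 1))) :
    ∃ l, IsWord n l ∧ wordProd n l = w ∧ l.length = invCount w := by
  induction hk : invCount w generalizing w with
  | zero =>
    refine ⟨[], by simp [IsWord], ?_, rfl⟩
    by_contra hw
    obtain ⟨a, hd⟩ := exists_isLeftDescent_of_ne_one (Ne.symm hw)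
    linarith [hd.invCount_simpleRefl_mul]
  | succ k ih =>
    have hw : w ≠ 1 := by rintro rfl; simp [invCount_one] at hk
    obtain ⟨a, hd⟩ := exists_isLeftDescent_of_ne_one hw
    obtain ⟨l, hl, hp, hlen⟩ :=
      ih (simpleRefl n a * w) (by linarith [hd.invCount_simpleRefl_mul])
    refine ⟨a :: l, ?_, by simp [wordProd_cons, hp], by simp [hlen]⟩
    simpa [IsWord] using ⟨hd.1, hl⟩

lemma isReduced_iff_length_eq_invCount {w : Perm (Fin (n + 1))} {l : List ℕ} :
    IsReduced n w l ↔ IsWord n l ∧ wordProd n l = w ∧ l.length = invCount w := by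
  refine ⟨fun ⟨hl, hp, hmin⟩ => ⟨hl, hp, le_antisymm ?_ (hp ▸ invCount_wordProd_le l)⟩,
    fun ⟨hl, hp, hlen⟩ =>
      ⟨hl, hp, fun l' _ hp' => hlen ▸ hp' ▸ invCount_wordProd_le l'⟩⟩
  obtain ⟨l₀, hl₀, hp₀, hlen₀⟩ := exists_word_length_eq_invCount w
  exact hlen₀ ▸ hmin l₀ hl₀ hp₀

lemma exists_isReduced (w : Perm (Fin (n + 1))) : ∃ l, IsReduced n w l := by
  simpa only [isReduced_iff_length_eq_invCount] using exists_word_length_eq_invCount w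

lemma isReduced_cons_iff {w : Perm (Fin (n + 1))} {a : ℕ} {l : List ℕ} :
    IsReduced n w (a :: l) ↔ IsLeftDescent w a ∧ IsReduced n (simpleRefl n a * w) l := by
  simp only [isReduced_iff_length_eq_invCount, IsWord, List.forall_mem_cons, wordProd_cons,
    List.length_cons]
  constructor
  · rintro ⟨⟨ha, hl⟩, hp, hlen⟩
    have hp' : wordProd n l = simpleRefl n a * w := by rw [← hp, simpleRefl_mul_simpleRefl_mul]
    have hd : IsLeftDescent w a := by
      by_contra hd
      have := invCount_simpleRefl_mul_of_not_isLeftDescent ha hd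
      have := hp' ▸ invCount_wordProd_le (n := n) l
      omega
    refine ⟨hd, hl, hp', ?_⟩
    have := hd.invCount_simpleRefl_mul
    omega
  · rintro ⟨hd, hl, hp, hlen⟩
    refine ⟨⟨hd.1, hl⟩, by rw [hp, simpleRefl_mul_simpleRefl_mul], ?_⟩
    have := hd.invCount_simpleRefl_mul
    omega

lemma IsReduced.length_eq {w : Perm (Fin (n + 1))} {l l' : List ℕ} (hl : IsReduced n w l)
    (hl' : IsReduced n w l') : l.length = l'.length :=
  le_antisymm (hl.2.2 l' hl'.1 hl'.2.1) (hl'.2.2 l hl.1 hl.2.1)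

lemma IsReduced.of_wordProd_eq {w : Perm (Fin (n + 1))} {l l' : List ℕ} (hl : IsReduced n w l)
    (hw : IsWord n l') (hp : wordProd n l' = wordProd n l) (hlen : l'.length = l.length) :
    IsReduced n w l' :=
  ⟨hw, hp.trans hl.2.1, fun l'' hw'' hp'' => hlen ▸ hl.2.2 l'' hw'' hp''⟩

lemma IsLeftDescent.simpleRefl_mul_of_far {w : Perm (Fin (n + 1))} {a b : ℕ}
    (h : IsLeftDescent w b) (hab : a + 2 ≤ b ∨ b + 2 ≤ a) :
    IsLeftDescent (simpleRefl n a * w) b := by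
  obtain ⟨hb, hd⟩ := h
  refine ⟨hb, ?_⟩
  rwa [simpleRefl_mul_inv_apply, simpleRefl_mul_inv_apply, simpleRefl_apply_of_ne _ (by omega)
    (by omega), simpleRefl_apply_of_ne _ (by omega) (by omega)]

lemma IsLeftDescent.simpleRefl_mul_braid {w : Perm (Fin (n + 1))} {a : ℕ}
    (ha : IsLeftDescent w a) (hb : IsLeftDescent w (a + 1)) :
    IsLeftDescent (simpleRefl n a * w) (a + 1) ∧
      IsLeftDescent (simpleRefl n (a + 1) * (simpleRefl n a * w)) a := by
  obtain ⟨ha, hda⟩ := ha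
  obtain ⟨hb, hdb⟩ := hb
  refine ⟨⟨hb, ?_⟩, ⟨ha, ?_⟩⟩
  · rw [simpleRefl_mul_inv_apply, simpleRefl_mul_inv_apply, simpleRefl_apply_right ha,
      simpleRefl_apply_of_ne _ (by omega) (by omega)]
    exact hdb.trans hda
  · rw [simpleRefl_mul_inv_apply, simpleRefl_mul_inv_apply, simpleRefl_mul_inv_apply,
      simpleRefl_mul_inv_apply, simpleRefl_apply_left hb, simpleRefl_apply_of_ne (a := a + 1) _
      (by omega) (by omega), simpleRefl_apply_left ha,
      simpleRefl_apply_of_ne _ (by omega) (by omega)]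
    exact hdb

end Inversions

section CommutationClasses

variable {n : ℕ}

open Equiv Relation

lemma CommMove.perm {l l' : List ℕ} (h : CommMove l l') : l.Perm l' := by
  obtain ⟨u, v, a, b, -, rfl, rfl⟩ := h
  exact (List.Perm.swap b a v).append_left u

lemma CommMove.cons (c : ℕ) {l l' : List ℕ} (h : CommMove l l') :
    CommMove (c :: l) (c :: l') := by
  obtain ⟨u, v, a, b, hab, rfl, rfl⟩ := h
  exact ⟨c :: u, v, a, b, hab, rfl, rfl⟩

lemma CommMove.wordProd_eq {l l' : List ℕ} (h : CommMove l l') :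
    wordProd n l' = wordProd n l := by
  obtain ⟨u, v, a, b, hab, rfl, rfl⟩ := h
  simp only [wordProd_append, wordProd_cons, ← mul_assoc, (simpleRefl_commute hab).eq]

lemma CommMove.isReduced {w : Perm (Fin (n + 1))} {l l' : List ℕ} (h : CommMove l l')
    (hl : IsReduced n w l) : IsReduced n w l' :=
  hl.of_wordProd_eq (fun a ha => hl.1 a (h.perm.mem_iff.mpr ha)) h.wordProd_eq
    h.perm.length_eq.symm

lemma count_eq_of_reflTransGen_commMove {l l' : List ℕ} (h : ReflTransGen CommMove l l')
    (a : ℕ) : l.count a = l'.count a := by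
  induction h with
  | refl => rfl
  | tail _ hstep ih => exact ih.trans (hstep.perm.count_eq a)

lemma reflTransGen_commMove_cons (c : ℕ) {l l' : List ℕ} (h : ReflTransGen CommMove l l') :
    ReflTransGen CommMove (c :: l) (c :: l') :=
  h.lift (c :: ·) fun _ _ => CommMove.cons c

def HasInvariantLetterCounts (n : ℕ) (w : Perm (Fin (n + 1))) : Prop :=
  ∀ a : ℕ, a < n → ∀ l l', IsReduced n w l → IsReduced n w l' → l.count a = l'.count a

lemma HasInvariantLetterCounts.simpleRefl_mul {w : Perm (Fin (n + 1))} {a : ℕ}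
    (h : HasInvariantLetterCounts n w) (hd : IsLeftDescent w a) :
    HasInvariantLetterCounts n (simpleRefl n a * w) := fun b hb l l' hl hl' => by
  simpa [List.count_cons] using
    h b hb _ _ (isReduced_cons_iff.mpr ⟨hd, hl⟩) (isReduced_cons_iff.mpr ⟨hd, hl'⟩)

lemma HasInvariantLetterCounts.not_isLeftDescent_succ {w : Perm (Fin (n + 1))} {a : ℕ}
    (h : HasInvariantLetterCounts n w) (ha : IsLeftDescent w a) : ¬ IsLeftDescent w (a + 1) := by
  intro hb
  obtain ⟨hb₁, ha₂⟩ := ha.simpleRefl_mul_braid hb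
  obtain ⟨r, hr⟩ :=
    exists_isReduced (simpleRefl n a * (simpleRefl n (a + 1) * (simpleRefl n a * w)))
  have h₁ : IsReduced n w (a :: (a + 1) :: a :: r) :=
    isReduced_cons_iff.mpr
      ⟨ha, isReduced_cons_iff.mpr ⟨hb₁, isReduced_cons_iff.mpr ⟨ha₂, hr⟩⟩⟩
  have h₂ : IsReduced n w ((a + 1) :: a :: (a + 1) :: r) := by
    refine h₁.of_wordProd_eq ?_ ?_ rfl
    · have hw := h₁.1
      simp only [IsWord, List.forall_mem_cons] at hw ⊢
      exact ⟨hw.2.1, hw.1, hw.2.1, hw.2.2.2⟩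
    · simp only [wordProd_cons, ← mul_assoc, simpleRefl_braid hb.1]
  simpa [List.count_cons] using h a ha.1 _ _ h₁ h₂

theorem HasInvariantLetterCounts.isFC {w : Perm (Fin (n + 1))}
    (h : HasInvariantLetterCounts n w) : IsFC n w := by
  intro l l' hl hl'
  induction hN : l.length generalizing w l l' with
  | zero =>
    rw [List.length_eq_zero_iff.mp hN,
      List.length_eq_zero_iff.mp ((hl.length_eq hl').symm.trans hN)]
  | succ N ih =>
    obtain _ | ⟨a, l₁⟩ := l
    · simp at hN
    obtain _ | ⟨b, l₁'⟩ := l'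
    · simpa using hl.length_eq hl'
    obtain ⟨ha, hl₁⟩ := isReduced_cons_iff.mp hl
    obtain ⟨hb, hl₁'⟩ := isReduced_cons_iff.mp hl'
    have hN₁ : l₁.length = N := by simpa using hN
    have hN₁' : l₁'.length = N := by simpa [hN₁] using (hl.length_eq hl').symm
    rcases (by omega : a = b ∨ b = a + 1 ∨ a = b + 1 ∨ (a + 2 ≤ b ∨ b + 2 ≤ a))
      with rfl | rfl | rfl | hab
    · exact reflTransGen_commMove_cons a (ih (h.simpleRefl_mul ha) _ _ hl₁ hl₁' hN₁)
    · exact absurd hb (h.not_isLeftDescent_succ ha)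
    · exact absurd ha (h.not_isLeftDescent_succ hb)
    · obtain ⟨r, hr⟩ := exists_isReduced (simpleRefl n b * (simpleRefl n a * w))
      have habr : IsReduced n w (a :: b :: r) :=
        isReduced_cons_iff.mpr
          ⟨ha, isReduced_cons_iff.mpr ⟨hb.simpleRefl_mul_of_far hab, hr⟩⟩
      have hmove : CommMove (a :: b :: r) (b :: a :: r) := ⟨[], r, a, b, hab, rfl, rfl⟩
      have hbr := (isReduced_cons_iff.mp habr).2
      have har := (isReduced_cons_iff.mp (hmove.isReduced habr)).2
      have hl₁_br := ih (h.simpleRefl_mul ha) _ _ hl₁ hbr hN₁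
      have har_l₁' :=
        ih (h.simpleRefl_mul hb) _ _ har hl₁' ((har.length_eq hl₁').trans hN₁')
      exact ((reflTransGen_commMove_cons a hl₁_br).tail hmove).trans
        (reflTransGen_commMove_cons b har_l₁')

end CommutationClasses

theorem statement_8_general (n : ℕ) (w : Equiv.Perm (Fin (n + 1))) :
    IsFC n w ↔ ∀ a : ℕ, a < n →
      ∀ l l', IsReduced n w l → IsReduced n w l' → l.count a = l'.count a :=
  ⟨fun h _ _ l l' hl hl' => count_eq_of_reflTransGen_commMove (h l l' hl hl') _,
    HasInvariantLetterCounts.isFC⟩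

/-- `w` is fully commutative iff for each letter the number of its
occurrences is the same in all reduced expressions of `w`. -/
theorem statement_8 (n : ℕ) (hn : 1 ≤ n) (w : Equiv.Perm (Fin (n + 1))) :
    IsFC n w ↔ ∀ a : ℕ, a < n →
      ∀ l l', IsReduced n w l → IsReduced n w l' → l.count a = l'.count a :=
  statement_8_general n w

end NCTL
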